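/- Let n ≥ 2 and let S = (s_{ij}) be a symmetric n×n real matrix. Define ℓ : (0,∞)^{n+1} → ℝ by ℓ(θ_0,…,θ_n) = log det K(θ) − tr(S · K(θ)), where K(θ) is the star-tree concentration matrix. Then for every θ ∈ (0,∞)^{n+1} and every i ∈ {0,1,…,n}, the partial derivative of ℓ with respect to θ_i at θ exists and equals 1/θ_i + (n−1)/(θ_0 + θ_1 + ⋯ + θ_n) − ∑_{j ∈ {0,…,n}, j ≠ i} c_{ij} θ_j. -/

import Mathlib

open Finset Matrix

/-- The star-tree concentration matrix `K(θ)` of the Brownian motion tree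
model on the star tree with leaves `0, 1, …, n` (root leaf `0`), in the path
parametrization: rows and columns are indexed by the non-root leaves
`1, …, n` (realized as `Fin n` via `i ↦ i.succ : Fin (n+1)`), with entries
`K(θ)_{ii} = θ_i · ∑_{t ≠ i} θ_t` and `K(θ)_{ij} = −θ_i θ_j` for `i ≠ j`. -/
def starK {n : ℕ} {R : Type*} [CommRing R] (θ : Fin (n + 1) → R) :
    Matrix (Fin n) (Fin n) R :=
  Matrix.of fun i j =>
    if i = j then θ i.succ * ∑ t ∈ Finset.univ.erase i.succ, θ t
    else -(θ i.succ * θ j.succ)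

/-- The coefficients `c_{ij}` (`0 ≤ i, j ≤ n`) associated to a symmetric
`n × n` matrix `S = (s_{ij})`: `c_{0j} = c_{j0} = s_{jj}` and
`c_{ij} = c_{ji} = s_{ii} + s_{jj} − 2 s_{ij}` for distinct `i, j ≥ 1`
(and `c_{ii} = 0`). -/
def cCoef {n : ℕ} {R : Type*} [CommRing R] (S : Matrix (Fin n) (Fin n) R) :
    Fin (n + 1) → Fin (n + 1) → R := fun i j =>
  Fin.cases (motive := fun _ => R)
    (Fin.cases (motive := fun _ => R) 0 (fun j' => S j' j') j)
    (fun i' => Fin.cases (motive := fun _ => R) (S i' i')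
      (fun j' => S i' i' + S j' j' - 2 * S i' j') j) i

lemma det_starK {n : ℕ} (hn : 1 ≤ n) (u : Fin (n + 1) → ℝ)
    (hT : (∑ j, u j) ≠ 0) :
    (starK u).det = (∏ j, u j) * (∑ j, u j) ^ (n - 1) := by
  obtain ⟨m, rfl⟩ := Nat.exists_eq_add_of_le hn
  set T := ∑ j, u j with hTdef
  set M : Matrix (Fin (1+m)) (Fin (1+m)) ℝ :=
    T • (1 + Matrix.replicateCol (Fin 1) (fun _ => -T⁻¹) *
      Matrix.replicateRow (Fin 1) (fun a : Fin (1+m) => u a.succ)) with hM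
  have hMapp : ∀ a b, M a b = (if a = b then T else 0) - u b.succ := by
    intro a b
    rcases eq_or_ne a b with rfl | hab
    · simp [hM, Matrix.mul_apply, Matrix.one_apply]
      field_simp
      ring
    · simp [hM, hab, Matrix.mul_apply, Matrix.one_apply]
      field_simp
  have hfac : starK u = Matrix.diagonal (fun a : Fin (1+m) => u a.succ) * M := by
    ext a b
    rw [Matrix.diagonal_mul, hMapp]
    rcases eq_or_ne a b with rfl | hab
    · simp [starK, Finset.sum_erase_eq_sub (Finset.mem_univ a.succ), hTdef]
    · simp [starK, hab]
  rw [hfac, Matrix.det_mul, Matrix.det_diagonal, hM, Matrix.det_smul]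
  erw [Matrix.det_one_add_replicateCol_mul_replicateRow (ι := Fin 1) (fun _ => -T⁻¹)
      (fun a : Fin (1+m) => u a.succ)]
  have hdot : (fun a : Fin (1+m) => u a.succ) ⬝ᵥ (fun _ => -T⁻¹)
      = -((T - u 0) * T⁻¹) := by
    simp only [dotProduct, ← Finset.sum_mul]
    rw [hTdef, Fin.sum_univ_succ]
    ring
  rw [hdot]
  have h1 : (1 + -((T - u 0) * T⁻¹)) = u 0 * T⁻¹ := by field_simp; ring
  rw [h1, Fin.prod_univ_succ]
  simp only [Fintype.card_fin, Nat.add_sub_cancel_left, pow_add, pow_one]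
  field_simp

lemma cCoef_diag {n : ℕ} (S : Matrix (Fin n) (Fin n) ℝ) (j : Fin (n + 1)) :
    cCoef S j j = 0 := by
  induction j using Fin.cases with
  | zero => simp [cCoef]
  | succ j' => simp [cCoef]; ring

lemma cCoef_symm {n : ℕ} (S : Matrix (Fin n) (Fin n) ℝ) (hS : S.IsSymm)
    (j k : Fin (n + 1)) : cCoef S j k = cCoef S k j := by
  induction j using Fin.cases with
  | zero =>
    induction k using Fin.cases with
    | zero => rfl
    | succ k' => simp [cCoef]
  | succ j' =>
    induction k using Fin.cases with
    | zero => simp [cCoef]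
    | succ k' => simp [cCoef, hS.apply k' j']; ring

lemma trace_starK {n : ℕ} (S : Matrix (Fin n) (Fin n) ℝ) (u : Fin (n + 1) → ℝ) :
    (S * starK u).trace
      = (∑ j, ∑ k ∈ Finset.univ.erase j, cCoef S j k * u j * u k) / 2 := by
  set v : Fin n → ℝ := fun a => u a.succ with hv
  set z : ℝ := u 0 with hz
  set Tn : ℝ := ∑ a, v a with hTn
  set D : ℝ := ∑ a, S a a * v a with hD
  set P : ℝ := ∑ a, ∑ b, S a b * v a * v b with hP
  have husum : ∑ t, u t = z + Tn := by rw [Fin.sum_univ_succ]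
  -- LHS
  have hL : (S * starK u).trace = D * (z + Tn) - P := by
    rw [Matrix.trace]
    have : ∀ a : Fin n, (S * starK u).diag a
        = S a a * v a * (z + Tn) - ∑ b, S a b * v a * v b := by
      intro a
      rw [Matrix.diag_apply, Matrix.mul_apply]
      rw [← Finset.add_sum_erase _ _ (Finset.mem_univ a)]
      have h1 : starK u a a = v a * (z + Tn - v a) := by
        simp [starK, Finset.sum_erase_eq_sub (Finset.mem_univ a.succ), husum, hv]
      have h2 : ∑ b ∈ Finset.univ.erase a, S a b * starK u b a
          = -(∑ b ∈ Finset.univ.erase a, S a b * v b * v a) := by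
        rw [← Finset.sum_neg_distrib]
        apply Finset.sum_congr rfl
        intro b hb
        have hba : b ≠ a := Finset.ne_of_mem_erase hb
        simp [starK, hba]
        ring
      rw [h1, h2, Finset.sum_erase_eq_sub (Finset.mem_univ a)]
      have h3 : ∑ b, S a b * v b * v a = ∑ b, S a b * v a * v b := by
        apply Finset.sum_congr rfl; intros; ring
      rw [h3]
      ring
    rw [Finset.sum_congr rfl (fun a _ => this a), Finset.sum_sub_distrib,
      ← Finset.sum_mul]
  -- RHS
  have hR : (∑ j, ∑ k ∈ Finset.univ.erase j, cCoef S j k * u j * u k)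
      = 2 * (z * D) + 2 * (Tn * D) - 2 * P := by
    have herase : ∀ j : Fin (n + 1), ∑ k ∈ Finset.univ.erase j,
        cCoef S j k * u j * u k = ∑ k, cCoef S j k * u j * u k := by
      intro j
      rw [Finset.sum_erase_eq_sub (Finset.mem_univ j), cCoef_diag]
      simp
    rw [Finset.sum_congr rfl (fun j _ => herase j)]
    rw [Fin.sum_univ_succ]
    have h0 : ∑ k, cCoef S 0 k * u 0 * u k = z * D := by
      rw [Fin.sum_univ_succ]
      simp [cCoef, hD, Finset.mul_sum]
      apply Finset.sum_congr rfl; intros; ring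
    have hsucc : ∀ j' : Fin n, ∑ k, cCoef S j'.succ k * u j'.succ * u k
        = S j' j' * v j' * z + (S j' j' * v j' * Tn + v j' * D
            - 2 * ∑ k', S j' k' * v j' * v k') := by
      intro j'
      rw [Fin.sum_univ_succ]
      have hzero : cCoef S j'.succ 0 * u j'.succ * u 0 = S j' j' * v j' * z := by
        simp [cCoef, hv, hz]
      rw [hzero]
      congr 1
      have hterm : ∀ k' : Fin n, cCoef S j'.succ k'.succ * u j'.succ * u k'.succ
            = (S j' j' * v j') * v k' + (S k' k' * v k') * v j'
                - 2 * (S j' k' * v j' * v k') := by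
        intro k'; simp [cCoef, hv]; ring
      rw [Finset.sum_congr rfl (fun k' _ => hterm k')]
      rw [Finset.sum_sub_distrib, Finset.sum_add_distrib,
        ← Finset.mul_sum, ← Finset.sum_mul, ← Finset.mul_sum]
      ring
    rw [h0, Finset.sum_congr rfl (fun j' _ => hsucc j')]
    rw [Finset.sum_add_distrib, Finset.sum_sub_distrib, Finset.sum_add_distrib]
    have e1 : ∑ j', S j' j' * v j' * z = D * z := by
      rw [hD, Finset.sum_mul]
    have e2 : ∑ j', S j' j' * v j' * Tn = D * Tn := by
      rw [hD, Finset.sum_mul]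
    have e3 : ∑ j', v j' * D = Tn * D := by rw [hTn, Finset.sum_mul]
    have e4 : ∑ j', 2 * ∑ k', S j' k' * v j' * v k' = 2 * P := by
      rw [hP, Finset.mul_sum]
    rw [e1, e2, e3, e4]
    ring
  rw [hL, hR]
  ring

/-- **Proposition 12 (score equations of the star tree model).**
Let `S` be a symmetric `n × n` real matrix and let
`ℓ(θ) = log det K(θ) − tr(S · K(θ))` be the log-likelihood function of the
Brownian motion tree model on the star tree with `n + 1` leaves.  For every
`θ ∈ (0,∞)^{n+1}` and every `i ∈ {0, 1, …, n}`, the partial derivative of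
`ℓ` with respect to `θ_i` at `θ` exists and equals
`1/θ_i + (n−1)/(θ_0 + θ_1 + ⋯ + θ_n) − ∑_{j ≠ i} c_{ij} θ_j`. -/
theorem score_equation_star {n : ℕ} (hn : 2 ≤ n)
    (S : Matrix (Fin n) (Fin n) ℝ) (hS : S.IsSymm)
    (θ : Fin (n + 1) → ℝ) (hθ : ∀ j, 0 < θ j) (i : Fin (n + 1)) :
    HasDerivAt
      (fun t : ℝ =>
        Real.log (starK (Function.update θ i t)).det
          - (S * starK (Function.update θ i t)).trace)
      (1 / θ i + ((n : ℝ) - 1) / (∑ j, θ j)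
        - ∑ j ∈ Finset.univ.erase i, cCoef S i j * θ j)
      (θ i) := by
  have hn1 : 1 ≤ n := by omega
  have hθi : 0 < θ i := hθ i
  set Pc : ℝ := ∏ j ∈ Finset.univ.erase i, θ j with hPcdef
  set Tc : ℝ := ∑ j ∈ Finset.univ.erase i, θ j with hTcdef
  set A : ℝ := ∑ j ∈ Finset.univ.erase i, cCoef S i j * θ j with hAdef
  set C : ℝ := ∑ j ∈ Finset.univ.erase i, ∑ k ∈ (Finset.univ.erase j).erase i,
      cCoef S j k * θ j * θ k with hCdef
  have hPc : 0 < Pc := Finset.prod_pos fun j _ => hθ j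
  have hTc : 0 ≤ Tc := Finset.sum_nonneg fun j _ => (hθ j).le
  have hsum : ∑ j, θ j = θ i + Tc :=
    (Finset.add_sum_erase Finset.univ θ (Finset.mem_univ i)).symm
  -- the affine form of the double sum
  have hF : ∀ t : ℝ, (∑ j, ∑ k ∈ Finset.univ.erase j,
      cCoef S j k * Function.update θ i t j * Function.update θ i t k)
      = 2 * A * t + C := by
    intro t
    rw [← Finset.add_sum_erase Finset.univ _ (Finset.mem_univ i)]
    have h1 : ∑ k ∈ Finset.univ.erase i,
        cCoef S i k * Function.update θ i t i * Function.update θ i t k = A * t := by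
      have hterm : ∀ k ∈ Finset.univ.erase i,
          cCoef S i k * Function.update θ i t i * Function.update θ i t k
            = (cCoef S i k * θ k) * t := by
        intro k hk
        have hki : k ≠ i := Finset.ne_of_mem_erase hk
        simp [Function.update_apply, hki]
        ring
      rw [Finset.sum_congr rfl hterm, ← Finset.sum_mul]
    have h2 : ∀ j ∈ Finset.univ.erase i, ∑ k ∈ Finset.univ.erase j,
        cCoef S j k * Function.update θ i t j * Function.update θ i t k
          = (cCoef S i j * θ j) * t + ∑ k ∈ (Finset.univ.erase j).erase i,
              cCoef S j k * θ j * θ k := by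
      intro j hj
      have hji : j ≠ i := Finset.ne_of_mem_erase hj
      have hi' : i ∈ Finset.univ.erase j :=
        Finset.mem_erase.mpr ⟨hji.symm, Finset.mem_univ i⟩
      rw [← Finset.add_sum_erase _ _ hi']
      congr 1
      · simp [Function.update_apply, hji, cCoef_symm S hS i j]
      · apply Finset.sum_congr rfl
        intro k hk
        have hki : k ≠ i := (Finset.mem_erase.mp hk).1
        simp [Function.update_apply, hji, hki]
    rw [h1, Finset.sum_congr rfl h2, Finset.sum_add_distrib, ← Finset.sum_mul]
    ring
  -- derivative of trace part
  have hQ : HasDerivAt (fun t => (S * starK (Function.update θ i t)).trace) A (θ i) := by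
    have hfun : (fun t => (S * starK (Function.update θ i t)).trace)
        = fun t => (2 * A * t + C) / 2 := by
      funext t
      rw [trace_starK S, hF t]
    rw [hfun]
    have := (((hasDerivAt_id (θ i)).const_mul (2 * A)).add_const C).div_const 2
    exact this.congr_deriv (by ring)
  -- derivative of the log part
  have hlog : HasDerivAt (fun t => Real.log t + Real.log Pc
        + ((n : ℝ) - 1) * Real.log (t + Tc))
      ((θ i)⁻¹ + ((n : ℝ) - 1) * (1 / (θ i + Tc))) (θ i) := by
    have hl1 : HasDerivAt (fun t : ℝ => Real.log t + Real.log Pc) ((θ i)⁻¹) (θ i) :=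
      (Real.hasDerivAt_log hθi.ne').add_const _
    have hl2 : HasDerivAt (fun t : ℝ => Real.log (t + Tc)) (1 / (θ i + Tc)) (θ i) := by
      have := ((hasDerivAt_id (θ i)).add_const Tc).log (by positivity)
      simpa using this
    exact hl1.add (hl2.const_mul _)
  have hg : HasDerivAt (fun t : ℝ => Real.log t + Real.log Pc
        + ((n : ℝ) - 1) * Real.log (t + Tc) - (S * starK (Function.update θ i t)).trace)
      (1 / θ i + ((n : ℝ) - 1) / (∑ j, θ j) - A) (θ i) := by
    have := hlog.sub hQ
    refine this.congr_deriv ?_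
    rw [hsum]
    field_simp
  -- eventual equality
  refine hg.congr_of_eventuallyEq ?_
  filter_upwards [eventually_gt_nhds hθi] with t ht
  have hupos : ∀ j, 0 < Function.update θ i t j := by
    intro j
    rcases eq_or_ne j i with rfl | hji
    · simpa using ht
    · simpa [Function.update_apply, hji] using hθ j
  have hTpos : 0 < ∑ j, Function.update θ i t j :=
    Finset.sum_pos (fun j _ => hupos j) Finset.univ_nonempty
  have hsd : Finset.univ \ {i} = Finset.univ.erase i :=
    Finset.sdiff_singleton_eq_erase i Finset.univ
  have hprod : ∏ j, Function.update θ i t j = t * Pc := by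
    have := Finset.prod_update_of_mem (Finset.mem_univ i) θ t
    rwa [hsd] at this
  have hsumu : ∑ j, Function.update θ i t j = t + Tc := by
    have := Finset.sum_update_of_mem (Finset.mem_univ i) θ t
    rwa [hsd] at this
  rw [det_starK hn1 _ hTpos.ne', hprod, hsumu]
  have htTc : 0 < t + Tc := by positivity
  rw [Real.log_mul (by positivity) (by positivity), Real.log_mul ht.ne' hPc.ne',
    Real.log_pow]
  have hcast : ((n - 1 : ℕ) : ℝ) = (n : ℝ) - 1 := by
    rw [Nat.cast_sub hn1]; norm_num
  rw [hcast]
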